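/- In an augmented tree (X, 𝓔) induced by a map Φ satisfying (A1) and (A2), there exists a constant L > 0 (depending only on d, δ₀, r, κ) such that every horizontal geodesic of (X, 𝓔) has length at most L. -/

import Mathlib

open Metric Filter

namespace HypIFS

/-- A rooted tree: a connected, locally finite simple graph with no cycles
and a distinguished root. -/
structure RootedTree (X : Type*) where
  G : SimpleGraph X
  isTree : G.IsTree
  locFin : ∀ x : X, {y | G.Adj x y}.Finite
  root : X

variable {X : Type*}

/-- the level `|x|` of a vertex: graph distance from the root. -/
noncomputable def lvl (T : RootedTree X) (x : X) : ℕ := T.G.dist T.root x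

/-- `p` is the parent `x⁻¹` of `x`. -/
def IsParent (T : RootedTree X) (p x : X) : Prop :=
  T.G.Adj p x ∧ lvl T p + 1 = lvl T x

/-- The graph `(X, 𝓔_v ∪ 𝓔_h)`. -/
def augGraph (T : RootedTree X) (Eh : X → X → Prop) : SimpleGraph X where
  Adj x y := (T.G.Adj x y ∨ Eh x y ∨ Eh y x) ∧ x ≠ y
  symm := by
    constructor
    rintro x y ⟨h1 | h2 | h3, hne⟩
    · exact ⟨Or.inl h1.symm, hne.symm⟩
    · exact ⟨Or.inr (Or.inr h2), hne.symm⟩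
    · exact ⟨Or.inr (Or.inl h3), hne.symm⟩
  loopless := ⟨fun x h => h.2 rfl⟩

/-- The Gromov product `|x ∧ y| = ½(|x| + |y| − d(x,y))` with respect to a root `o`. -/
noncomputable def gprod {V : Type*} (G : SimpleGraph V) (o x y : V) : ℝ :=
  ((G.dist o x : ℝ) + (G.dist o y : ℝ) - (G.dist x y : ℝ)) / 2

/-- Gromov hyperbolicity of a graph with basepoint `o`. -/
def GromovHyperbolic {V : Type*} (G : SimpleGraph V) (o : V) : Prop :=
  ∃ δ : ℝ, 0 ≤ δ ∧ ∀ x y z : V,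
    min (gprod G o x z) (gprod G o z y) - δ ≤ gprod G o x y

/-- The distance `dist(A, B)` between two subsets of a metric space. -/
noncomputable def setDist {E : Type*} [PseudoMetricSpace E] (A B : Set E) : ℝ :=
  sInf (Set.image2 dist A B)

/-- The horizontal edge set `𝓔_h` induced by the set-valued map `Φ`:
`(x,y) ∈ 𝓔_h` iff `|x| = |y|`, `x ≠ y` and `dist(Φ(x), Φ(y)) ≤ κ r^{|x|}`. -/
def EhPhi {d : ℕ} (T : RootedTree X) (Φ : X → Set (EuclideanSpace ℝ (Fin d)))
    (r κ : ℝ) (x y : X) : Prop :=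
  lvl T x = lvl T y ∧ x ≠ y ∧ setDist (Φ x) (Φ y) ≤ κ * r ^ lvl T x

/-- `w 0, w 1, …, w n` is a horizontal geodesic of length `n` in the graph
`(X, 𝓔_v ∪ 𝓔_h)`: consecutive vertices joined by horizontal edges, all vertices
in one level, and the path has minimal length. -/
def IsHorizGeodesic (T : RootedTree X) (Eh : X → X → Prop) (n : ℕ) (w : ℕ → X) : Prop :=
  (∀ i < n, Eh (w i) (w (i + 1)) ∧ w i ≠ w (i + 1)) ∧
  (∀ i ≤ n, lvl T (w i) = lvl T (w 0)) ∧
  (augGraph T Eh).dist (w 0) (w n) = n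

/-! Along a horizontal geodesic `w 0, …, w n` at level `m`, consecutive sets `Φ (w i)` are
`κ rᵐ`-close and have diameter at most `δ₀ rᵐ`, so `Φ (w 0)` and `Φ (w n)` are within
`n (δ₀ + κ) rᵐ`. Their ancestors `k = (n - 2) / 2` levels up contain them, and since `n rᵏ → 0`,
for large `n` this distance is at most `κ r^(m - k)`: the two ancestors coincide or are joined by a
horizontal edge. Going up, across and down is then a path of length `2k + 1 < n`. -/

open Topology

section Tree

variable (T : RootedTree X)

lemma eq_of_lvl_eq_zero {x y : X} (hx : lvl T x = 0) (hy : lvl T y = 0) : x = y := by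
  rw [lvl, T.isTree.connected.dist_eq_zero_iff] at hx hy
  exact hx.symm.trans hy

lemma exists_isParent {x : X} (hx : 0 < lvl T x) : ∃ p, IsParent T p x := by
  have hconn := T.isTree.connected
  obtain ⟨q, hq⟩ := hconn.exists_walk_length_eq_dist x T.root
  have hne : x ≠ T.root := by rintro rfl; simp [lvl] at hx
  obtain ⟨p, hadj, q', rfl⟩ := SimpleGraph.Walk.exists_eq_cons_of_ne hne q
  refine ⟨p, hadj.symm, le_antisymm ?_ ?_⟩
  · have hp : lvl T p ≤ q'.length := by
      rw [lvl, SimpleGraph.dist_comm]; exact SimpleGraph.dist_le q'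
    have hlen : lvl T x = q'.length + 1 := by
      rw [lvl, SimpleGraph.dist_comm, ← hq, SimpleGraph.Walk.length_cons]
    omega
  · calc lvl T x ≤ lvl T p + T.G.dist p x := hconn.dist_triangle
      _ = lvl T p + 1 := by rw [SimpleGraph.dist_eq_one_iff_adj.mpr hadj.symm]

lemma exists_ancestor {x : X} {k : ℕ} (hk : k ≤ lvl T x) :
    ∃ u, Relation.ReflTransGen (IsParent T) u x ∧ lvl T u + k = lvl T x := by
  induction k with
  | zero => exact ⟨x, .refl, rfl⟩
  | succ k ih =>
    obtain ⟨u, hux, hu⟩ := ih (by omega)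
    obtain ⟨p, hpu⟩ := exists_isParent T (x := u) (by omega)
    exact ⟨p, .head hpu hux, by rw [← hu, ← hpu.2]; ring⟩

variable {T}

lemma subset_of_ancestor {E : Type*} {Φ : X → Set E} (hmono : ∀ p x, IsParent T p x → Φ x ⊆ Φ p)
    {u x : X} (h : Relation.ReflTransGen (IsParent T) u x) : Φ x ⊆ Φ u := by
  induction h with
  | refl => rfl
  | tail _ hbx ih => exact (hmono _ _ hbx).trans ih

end Tree

section AugmentedTree

variable {T : RootedTree X} {Eh : X → X → Prop}

lemma augGraph_adj_of_isParent {p x : X} (h : IsParent T p x) : (augGraph T Eh).Adj p x :=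
  ⟨Or.inl h.1, h.1.ne⟩

lemma augGraph_connected (T : RootedTree X) (Eh : X → X → Prop) : (augGraph T Eh).Connected :=
  T.isTree.connected.mono fun _ _ h => ⟨Or.inl h, h.ne⟩

lemma augGraph_dist_add_lvl_le_of_ancestor {u x : X}
    (h : Relation.ReflTransGen (IsParent T) u x) :
    (augGraph T Eh).dist u x + lvl T u ≤ lvl T x := by
  induction h with
  | refl => simp
  | @tail b x _ hbx ih =>
    have hbx1 : (augGraph T Eh).dist b x = 1 :=
      SimpleGraph.dist_eq_one_iff_adj.mpr (augGraph_adj_of_isParent hbx)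
    have htri := (augGraph_connected T Eh).dist_triangle (u := u) (v := b) (w := x)
    have hlvl := hbx.2
    omega

lemma augGraph_dist_le_of_ancestors {x y u v : X} {k : ℕ}
    (hu : Relation.ReflTransGen (IsParent T) u x) (hv : Relation.ReflTransGen (IsParent T) v y)
    (hux : lvl T u + k = lvl T x) (hvy : lvl T v + k = lvl T y) (huv : u = v ∨ Eh u v) :
    (augGraph T Eh).dist x y ≤ 2 * k + 1 := by
  have hconn := augGraph_connected T Eh
  have hu' := augGraph_dist_add_lvl_le_of_ancestor (Eh := Eh) hu
  have hv' := augGraph_dist_add_lvl_le_of_ancestor (Eh := Eh) hv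
  have huv' : (augGraph T Eh).dist u v ≤ 1 := by
    by_cases heq : u = v
    · simp [heq]
    · have hadj : (augGraph T Eh).Adj u v := ⟨Or.inr (Or.inl (huv.resolve_left heq)), heq⟩
      rw [SimpleGraph.dist_eq_one_iff_adj.mpr hadj]
  have hxu := hconn.dist_triangle (u := x) (v := u) (w := y)
  have huy := hconn.dist_triangle (u := u) (v := v) (w := y)
  rw [SimpleGraph.dist_comm (u := x) (v := u)] at hxu
  omega

end AugmentedTree

section SetDist

variable {E : Type*} [PseudoMetricSpace E] {A A' B B' C : Set E}

lemma setDist_le_dist {a b : E} (ha : a ∈ A) (hb : b ∈ B) : setDist A B ≤ dist a b :=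
  csInf_le ⟨0, by rintro _ ⟨_, _, _, _, rfl⟩; exact dist_nonneg⟩ (Set.mem_image2_of_mem ha hb)

lemma exists_dist_lt_of_setDist_lt (hA : A.Nonempty) (hB : B.Nonempty) {c : ℝ}
    (h : setDist A B < c) : ∃ a ∈ A, ∃ b ∈ B, dist a b < c := by
  obtain ⟨_, ⟨a, ha, b, hb, rfl⟩, hab⟩ := exists_lt_of_csInf_lt (hA.image2 hB) h
  exact ⟨a, ha, b, hb, hab⟩

lemma setDist_anti (hA : A.Nonempty) (hB : B.Nonempty) (hAA' : A ⊆ A') (hBB' : B ⊆ B') :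
    setDist A' B' ≤ setDist A B :=
  le_csInf (hA.image2 hB) <| by
    rintro _ ⟨a, ha, b, hb, rfl⟩
    exact setDist_le_dist (hAA' ha) (hBB' hb)

lemma setDist_le_setDist_add_diam_add_setDist (hA : A.Nonempty) (hB : B.Nonempty)
    (hC : C.Nonempty) (hBb : Bornology.IsBounded B) :
    setDist A C ≤ setDist A B + diam B + setDist B C := by
  refine le_of_forall_pos_lt_add fun ε hε => ?_
  obtain ⟨a, ha, b, hb, hab⟩ :=
    exists_dist_lt_of_setDist_lt hA hB (lt_add_of_pos_right (setDist A B) (half_pos hε))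
  obtain ⟨b', hb', c, hc, hbc⟩ :=
    exists_dist_lt_of_setDist_lt hB hC (lt_add_of_pos_right (setDist B C) (half_pos hε))
  have hbb' : dist b b' ≤ diam B := dist_le_diam_of_mem hBb hb hb'
  calc setDist A C ≤ dist a c := setDist_le_dist ha hc
    _ ≤ dist a b + dist b b' + dist b' c := dist_triangle4 a b b' c
    _ < setDist A B + diam B + setDist B C + ε := by linarith

lemma setDist_le_of_chain (A : ℕ → Set E) (n : ℕ) {c D : ℝ} (hne : ∀ i ≤ n, (A i).Nonempty)
    (hbdd : ∀ i < n, Bornology.IsBounded (A i)) (hdiam : ∀ i < n, diam (A i) ≤ D)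
    (hstep : ∀ i < n, setDist (A i) (A (i + 1)) ≤ c) :
    setDist (A 0) (A n) ≤ n * (D + c) := by
  induction n with
  | zero =>
    obtain ⟨a, ha⟩ := hne 0 le_rfl
    simpa using setDist_le_dist ha ha
  | succ n ih =>
    have ih' := ih (fun i hi => hne i (by omega)) (fun i hi => hbdd i (by omega))
      (fun i hi => hdiam i (by omega)) (fun i hi => hstep i (by omega))
    calc setDist (A 0) (A (n + 1))
        ≤ setDist (A 0) (A n) + diam (A n) + setDist (A n) (A (n + 1)) :=
          setDist_le_setDist_add_diam_add_setDist (hne 0 (by omega)) (hne n (by omega))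
            (hne (n + 1) le_rfl) (hbdd n (by omega))
      _ ≤ n * (D + c) + D + c := by linarith [hdiam n (by omega), hstep n (by omega)]
      _ = (n + 1 : ℕ) * (D + c) := by push_cast; ring

end SetDist

lemma eventually_mul_mul_pow_half_le {r : ℝ} (hr0 : 0 ≤ r) (hr1 : r < 1) (C : ℝ) {ε : ℝ}
    (hε : 0 < ε) : ∀ᶠ n : ℕ in atTop, C * n * r ^ ((n - 2) / 2) ≤ ε := by
  have hhalf : Tendsto (fun n : ℕ => (n - 2) / 2) atTop atTop :=
    (Nat.tendsto_div_const_atTop two_ne_zero).comp (tendsto_sub_atTop_nat 2)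
  have hlin : Tendsto (fun k : ℕ => (2 * k + 3 : ℝ) * r ^ k) atTop (𝓝 0) := by
    have := ((tendsto_self_mul_const_pow_of_lt_one hr0 hr1).const_mul 2).add
      ((tendsto_pow_atTop_nhds_zero_of_lt_one hr0 hr1).const_mul 3)
    simpa [add_mul, mul_assoc] using this
  have hlim : Tendsto (fun n : ℕ => (n : ℝ) * r ^ ((n - 2) / 2)) atTop (𝓝 0) := by
    refine squeeze_zero' (Eventually.of_forall fun n => by positivity) ?_ (hlin.comp hhalf)
    filter_upwards [eventually_ge_atTop 2] with n hn
    have hn' : (n : ℝ) ≤ 2 * ((n - 2) / 2 : ℕ) + 3 := by exact_mod_cast (by omega)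
    exact mul_le_mul_of_nonneg_right hn' (by positivity)
  simpa [mul_assoc] using (hlim.const_mul C).eventually_le_const (show C * 0 < ε by simpa using hε)

section HorizontalGeodesic

variable {d : ℕ} {T : RootedTree X} {Φ : X → Set (EuclideanSpace ℝ (Fin d))} {δ₀ r κ : ℝ}
  {n : ℕ} {w : ℕ → X}

lemma IsHorizGeodesic.setDist_le (hw : IsHorizGeodesic T (EhPhi T Φ r κ) n w)
    (hbdd : ∀ x, Bornology.IsBounded (Φ x)) (hne : ∀ x, (Φ x).Nonempty)
    (hdiam : ∀ x, diam (Φ x) ≤ δ₀ * r ^ lvl T x) :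
    setDist (Φ (w 0)) (Φ (w n)) ≤ n * ((δ₀ + κ) * r ^ lvl T (w 0)) := by
  obtain ⟨hstep, hlvl, -⟩ := hw
  refine (setDist_le_of_chain (Φ ∘ w) n (D := δ₀ * r ^ lvl T (w 0)) (c := κ * r ^ lvl T (w 0))
    (fun i _ => hne _) (fun i _ => hbdd _) (fun i hi => ?_) (fun i hi => ?_)).trans_eq (by ring)
  · simpa only [Function.comp, hlvl i hi.le] using hdiam (w i)
  · simpa only [Function.comp, hlvl i hi.le] using (hstep i hi).1.2.2

lemma IsHorizGeodesic.lt_mul_pow (hw : IsHorizGeodesic T (EhPhi T Φ r κ) n w)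
    (hbdd : ∀ x, Bornology.IsBounded (Φ x)) (hne : ∀ x, (Φ x).Nonempty)
    (hmono : ∀ p x, IsParent T p x → Φ x ⊆ Φ p) (hdiam : ∀ x, diam (Φ x) ≤ δ₀ * r ^ lvl T x)
    (hr : 0 ≤ r) (hn : 2 ≤ n) : κ < (δ₀ + κ) * n * r ^ ((n - 2) / 2) := by
  by_contra! hsmall
  -- climb `(n - 2) / 2` levels, or to the root if the geodesic lies higher than that
  set k := min ((n - 2) / 2) (lvl T (w 0))
  obtain ⟨u, hu, hum⟩ := exists_ancestor T (x := w 0) (k := k) (min_le_right _ _)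
  have hlvl_n : lvl T (w n) = lvl T (w 0) := hw.2.1 n le_rfl
  obtain ⟨v, hv, hvm⟩ := exists_ancestor T (x := w n) (k := k) (hlvl_n ▸ min_le_right _ _)
  have huv : u = v ∨ EhPhi T Φ r κ u v := by
    by_cases heq : u = v
    · exact .inl heq
    have hk : k = (n - 2) / 2 := by
      by_contra hk
      exact heq (eq_of_lvl_eq_zero T (by omega) (by omega))
    refine .inr ⟨by omega, heq, ?_⟩
    calc setDist (Φ u) (Φ v)
        ≤ setDist (Φ (w 0)) (Φ (w n)) :=
          setDist_anti (hne _) (hne _) (subset_of_ancestor hmono hu) (subset_of_ancestor hmono hv)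
      _ ≤ n * ((δ₀ + κ) * r ^ lvl T (w 0)) := hw.setDist_le hbdd hne hdiam
      _ = (δ₀ + κ) * n * r ^ ((n - 2) / 2) * r ^ lvl T u := by rw [← hum, pow_add, hk]; ring
      _ ≤ κ * r ^ lvl T u := by gcongr
  have hdist := augGraph_dist_le_of_ancestors hu hv hum hvm huv
  rw [hw.2.2] at hdist
  omega

end HorizontalGeodesic

theorem horizontal_geodesics_bounded_general (d : ℕ) (δ₀ r κ : ℝ)
    (hr0 : 0 < r) (hr1 : r < 1) (hκ : 0 < κ) :
    ∃ L : ℕ, 0 < L ∧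
      ∀ (X : Type) (T : RootedTree X) (Φ : X → Set (EuclideanSpace ℝ (Fin d))),
        (∀ x, IsCompact (Φ x)) → (∀ x, (Φ x).Nonempty) →
        (∀ p x, IsParent T p x → Φ x ⊆ Φ p) →
        (∀ x, δ₀⁻¹ * r ^ lvl T x ≤ diam (Φ x) ∧ diam (Φ x) ≤ δ₀ * r ^ lvl T x) →
        ∀ (n : ℕ) (w : ℕ → X), IsHorizGeodesic T (EhPhi T Φ r κ) n w → n ≤ L := by
  obtain ⟨N, hN⟩ := eventually_atTop.1
    ((eventually_mul_mul_pow_half_le hr0.le hr1 (δ₀ + κ) hκ).and (eventually_ge_atTop 2))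
  refine ⟨N, ?_, fun X T Φ hcomp hne hmono hdiam n w hw => ?_⟩
  · have := (hN N le_rfl).2
    omega
  by_contra! hNn
  have hn := hN n hNn.le
  exact (hw.lt_mul_pow (fun x => (hcomp x).isBounded) hne hmono (fun x => (hdiam x).2)
    hr0.le hn.2).not_ge hn.1

/-- In an augmented tree induced by a map `Φ` satisfying (A1) and (A2), there is
a constant `L > 0` depending only on `d, δ₀, r, κ` bounding the length of every
horizontal geodesic. -/
theorem horizontal_geodesics_bounded (d : ℕ) (δ₀ r κ : ℝ)
    (hδ₀ : 1 < δ₀) (hr0 : 0 < r) (hr1 : r < 1) (hκ : 0 < κ) :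
    ∃ L : ℕ, 0 < L ∧
      ∀ (X : Type) (T : RootedTree X) (Φ : X → Set (EuclideanSpace ℝ (Fin d))),
        (∀ x, IsCompact (Φ x)) → (∀ x, (Φ x).Nonempty) →
        (∀ p x, IsParent T p x → Φ x ⊆ Φ p) →
        (∀ x, δ₀⁻¹ * r ^ lvl T x ≤ diam (Φ x) ∧ diam (Φ x) ≤ δ₀ * r ^ lvl T x) →
        ∀ (n : ℕ) (w : ℕ → X), IsHorizGeodesic T (EhPhi T Φ r κ) n w → n ≤ L :=
  horizontal_geodesics_bounded_general d δ₀ r κ hr0 hr1 hκ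

end HypIFS
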